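/- Let $\{u_i\}_{i=0}^{n}$ be a sequence of closed bounded intervals with $u_0 = [0,0]$, such that both endpoint sequences $\underline{u_i}$ and $\overline{u_i}$ are non-decreasing and the length $\mathrm{len}(u_i)$ is non-decreasing. Let $\lambda_1, \lambda_2 \geq 1$ be natural numbers. Then (forward/delta version) $\sum_{i=0}^{n-1} \|u_i^{\lambda_1}(\Delta u_i)^{\lambda_2}\| \leq \frac{\lambda_2 (n+1)^{\lambda_1}}{\lambda_1 + \lambda_2} \sum_{i=0}^{n-1} \|\Delta u_i\|^{\lambda_1 + \lambda_2}$, where $\Delta u_i = u_{i+1} \ominus_g u_i$. -/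

import Mathlib

/-- gH-difference of intervals given by endpoint pairs. -/
def gH (u v : ℝ × ℝ) : ℝ × ℝ :=
  (min (u.1 - v.1) (u.2 - v.2), max (u.1 - v.1) (u.2 - v.2))

/-- Interval multiplication. -/
def imul (u v : ℝ × ℝ) : ℝ × ℝ :=
  (min (min (u.1 * v.1) (u.1 * v.2)) (min (u.2 * v.1) (u.2 * v.2)),
   max (max (u.1 * v.1) (u.1 * v.2)) (max (u.2 * v.1) (u.2 * v.2)))

/-- Power of an interval, as the image interval `{t^k : t ∈ u}`. -/
noncomputable def ipowI (u : ℝ × ℝ) (k : ℕ) : ℝ × ℝ :=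
  (sInf ((fun t : ℝ => t ^ k) '' Set.Icc u.1 u.2),
   sSup ((fun t : ℝ => t ^ k) '' Set.Icc u.1 u.2))

/-- Quasi-norm of an interval. -/
def inorm (u : ℝ × ℝ) : ℝ := max |u.1| |u.2|

/-! Monotonicity of the endpoints and of the length, starting from `[0, 0]`, makes every `u i`
and every `Δ u i = [lo (i + 1) - lo i, hi (i + 1) - hi i]` a nonnegative interval, so all the norms
are upper endpoints: with `d i = hi (i + 1) - hi i` the claim becomes the discrete Opial inequality
`(p + q) ∑ (∑_{j<i} d j)^p d i^q ≤ q n^p ∑ d i^(p+q)`, even with `n^p` in place of `(n + 1)^p`.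
It goes by induction on `n`: Young's inequality for the partial sum and `n d n`, with the power
mean inequality, bounds the new summand by `p n^(p-1) E + q n^p d n^(p+q)` (`E` the old
right-hand sum), and Bernoulli's `p n^(p-1) ≤ (n + 1)^p - n^p` absorbs the first term into the
growth of the factor `n^p`. -/

open Finset

theorem young_inequality_pow (p q : ℕ) {x y : ℝ} (hx : 0 ≤ x) (hy : 0 ≤ y) :
    ((p : ℝ) + q) * (x ^ p * y ^ q) ≤ p * x ^ (p + q) + q * y ^ (p + q) := by
  rcases Nat.eq_zero_or_pos (p + q) with h | h
  · obtain ⟨rfl, rfl⟩ : p = 0 ∧ q = 0 := by omega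
    simp
  have hpq : (0 : ℝ) < p + q := by exact_mod_cast h
  have root_pow {z : ℝ} (hz : 0 ≤ z) (k : ℕ) :
      (z ^ (p + q)) ^ ((k : ℝ) / (p + q)) = z ^ k := by
    rw [← Real.rpow_natCast z (p + q), ← Real.rpow_mul hz, Nat.cast_add,
      mul_div_cancel₀ _ hpq.ne', Real.rpow_natCast]
  have amgm := Real.geom_mean_le_arith_mean2_weighted (w₁ := p / (p + q)) (w₂ := q / (p + q))
    (by positivity) (by positivity) (pow_nonneg hx (p + q)) (pow_nonneg hy (p + q))
    (by field_simp)
  rw [root_pow hx, root_pow hy] at amgm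
  calc ((p : ℝ) + q) * (x ^ p * y ^ q)
      ≤ (p + q) * (p / (p + q) * x ^ (p + q) + q / (p + q) * y ^ (p + q)) := by gcongr
    _ = p * x ^ (p + q) + q * y ^ (p + q) := by field_simp

theorem succ_mul_pow_le_add_one_pow_sub_pow (m : ℕ) {x : ℝ} (hx : 0 ≤ x) :
    ((m : ℝ) + 1) * x ^ m ≤ (x + 1) ^ (m + 1) - x ^ (m + 1) := by
  induction m with
  | zero => simp
  | succ k ih =>
    calc ((k + 1 : ℕ) + (1 : ℝ)) * x ^ (k + 1) = ((k + 1) * x ^ k) * x + x ^ (k + 1) := by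
          push_cast; ring
      _ ≤ ((x + 1) ^ (k + 1) - x ^ (k + 1)) * (x + 1) + x ^ (k + 1) := by
          have hk : (0 : ℝ) ≤ (k + 1) * x ^ k := by positivity
          gcongr ?_ + _
          exact mul_le_mul ih (by linarith) hx (hk.trans ih)
      _ = (x + 1) ^ (k + 1 + 1) - x ^ (k + 1 + 1) := by ring

theorem apply_zero_le_of_le_succ {α : Type*} [Preorder α] {f : ℕ → α} {n : ℕ}
    (hf : ∀ i < n, f i ≤ f (i + 1)) {i : ℕ} (hi : i ≤ n) : f 0 ≤ f i := by
  induction i with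
  | zero => rfl
  | succ k ih => exact (ih (by omega)).trans (hf k hi)

section DiscreteOpial

variable {d : ℕ → ℝ}

theorem discrete_opial_summand_le (m q : ℕ) {n : ℕ} (hd : ∀ i < n, 0 ≤ d i)
    (hdn : 0 ≤ d n) :
    ((m + 1 : ℕ) + (q : ℝ)) * ((∑ j ∈ range n, d j) ^ (m + 1) * d n ^ q)
      ≤ (m + 1 : ℕ) * (n : ℝ) ^ m * ∑ j ∈ range n, d j ^ (m + 1 + q)
        + q * (n : ℝ) ^ (m + 1) * d n ^ (m + 1 + q) := by
  rcases Nat.eq_zero_or_pos n with rfl | hn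
  · simp
  have hS : 0 ≤ ∑ j ∈ range n, d j := sum_nonneg fun j hj => hd j (mem_range.mp hj)
  have young := young_inequality_pow (m + 1) q hS (mul_nonneg (Nat.cast_nonneg n) hdn)
  have power_mean : (∑ j ∈ range n, d j) ^ (m + q + 1)
      ≤ (n : ℝ) ^ (m + q) * ∑ j ∈ range n, d j ^ (m + q + 1) := by
    simpa using
      pow_sum_le_card_mul_sum_pow (s := range n) (fun j hj => hd j (mem_range.mp hj)) _
  rw [show m + 1 + q = m + q + 1 by omega] at young ⊢
  have hnq : (0 : ℝ) < (n : ℝ) ^ q := by positivity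
  refine le_of_mul_le_mul_right ?_ hnq
  calc ((m + 1 : ℕ) + (q : ℝ)) * ((∑ j ∈ range n, d j) ^ (m + 1) * d n ^ q) * (n : ℝ) ^ q
      = ((m + 1 : ℕ) + (q : ℝ)) * ((∑ j ∈ range n, d j) ^ (m + 1) * (n * d n) ^ q) := by
        ring
    _ ≤ (m + 1 : ℕ) * (∑ j ∈ range n, d j) ^ (m + q + 1) + q * (n * d n) ^ (m + q + 1) := young
    _ ≤ (m + 1 : ℕ) * ((n : ℝ) ^ (m + q) * ∑ j ∈ range n, d j ^ (m + q + 1))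
          + q * (n * d n) ^ (m + q + 1) := by gcongr
    _ = _ := by ring

theorem discrete_opial (p q : ℕ) (hp : 1 ≤ p) (hq : 1 ≤ q) {n : ℕ}
    (hd : ∀ i < n, 0 ≤ d i) :
    ((p : ℝ) + q) * ∑ i ∈ range n, (∑ j ∈ range i, d j) ^ p * d i ^ q
      ≤ q * (n : ℝ) ^ p * ∑ i ∈ range n, d i ^ (p + q) := by
  obtain ⟨m, rfl⟩ : ∃ m, p = m + 1 := ⟨p - 1, by omega⟩
  induction n with
  | zero => simp
  | succ n ih =>
    have hdn : 0 ≤ d n := hd n n.lt_succ_self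
    set E := ∑ i ∈ range n, d i ^ (m + 1 + q)
    have hE : 0 ≤ E :=
      sum_nonneg fun i hi => pow_nonneg (hd i ((mem_range.mp hi).trans n.lt_succ_self)) _
    have bernoulli := succ_mul_pow_le_add_one_pow_sub_pow m (Nat.cast_nonneg (α := ℝ) n)
    have hq_one : (1 : ℝ) ≤ q := by exact_mod_cast hq
    have hmono : (n : ℝ) ^ (m + 1) ≤ ((n : ℝ) + 1) ^ (m + 1) := by gcongr; linarith
    rw [sum_range_succ, sum_range_succ, mul_add]
    calc _ ≤ q * (n : ℝ) ^ (m + 1) * E + ((m + 1 : ℕ) * (n : ℝ) ^ m * E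
          + q * (n : ℝ) ^ (m + 1) * d n ^ (m + 1 + q)) :=
          add_le_add (ih fun i hi => hd i (by omega))
            (discrete_opial_summand_le m q (fun i hi => hd i (by omega)) hdn)
      _ ≤ q * (n : ℝ) ^ (m + 1) * E + (q * (((n : ℝ) + 1) ^ (m + 1) - (n : ℝ) ^ (m + 1)) * E
          + q * ((n : ℝ) + 1) ^ (m + 1) * d n ^ (m + 1 + q)) := by
        push_cast
        gcongr _ + (?_ * E + ?_)
        · exact bernoulli.trans (le_mul_of_one_le_left (sub_nonneg.2 hmono) hq_one)
        · gcongr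
      _ = _ := by push_cast; ring

end DiscreteOpial

theorem gH_of_sub_le {a b c d : ℝ} (h : a - c ≤ b - d) : gH (a, b) (c, d) = (a - c, b - d) := by
  simp [gH, h]

theorem ipowI_of_nonneg {a b : ℝ} (ha : 0 ≤ a) (hab : a ≤ b) (k : ℕ) :
    ipowI (a, b) k = (a ^ k, b ^ k) := by
  have hmono : MonotoneOn (fun t : ℝ => t ^ k) (Set.Icc a b) :=
    fun s hs t _ hst => pow_le_pow_left₀ (ha.trans hs.1) hst k
  rw [ipowI, hmono.sInf_image_Icc hab, hmono.sSup_image_Icc hab]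

theorem imul_of_nonneg {a b c d : ℝ} (ha : 0 ≤ a) (hab : a ≤ b) (hc : 0 ≤ c) (hcd : c ≤ d) :
    imul (a, b) (c, d) = (a * c, b * d) := by
  have hb := ha.trans hab
  have hd := hc.trans hcd
  have hac : a * c ≤ a * d := by gcongr
  have hbc : b * c ≤ b * d := by gcongr
  have hca : a * c ≤ b * c := by gcongr
  have hda : a * d ≤ b * d := by gcongr
  simp [imul, hac, hbc, hca, hda]

theorem inorm_of_nonneg {a b : ℝ} (ha : 0 ≤ a) (hab : a ≤ b) : inorm (a, b) = b := by
  simp [inorm, abs_of_nonneg ha, abs_of_nonneg (ha.trans hab), hab]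

theorem inorm_imul_ipowI_of_nonneg {a b c d : ℝ} (ha : 0 ≤ a) (hab : a ≤ b) (hc : 0 ≤ c)
    (hcd : c ≤ d) (k l : ℕ) :
    inorm (imul (ipowI (a, b) k) (ipowI (c, d) l)) = b ^ k * d ^ l := by
  have hb := ha.trans hab
  rw [ipowI_of_nonneg ha hab, ipowI_of_nonneg hc hcd,
    imul_of_nonneg (by positivity) (by gcongr) (by positivity) (by gcongr),
    inorm_of_nonneg (by positivity) (by gcongr)]

theorem interval_opial_forward
    (n : ℕ) (lo hi : ℕ → ℝ) (l1 l2 : ℕ)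
    (hl1 : 1 ≤ l1) (hl2 : 1 ≤ l2)
    (hvalid : ∀ i ≤ n, lo i ≤ hi i)
    (h0lo : lo 0 = 0) (h0hi : hi 0 = 0)
    (hlo : ∀ i < n, lo i ≤ lo (i + 1))
    (hhi : ∀ i < n, hi i ≤ hi (i + 1))
    (hlen : ∀ i < n, hi i - lo i ≤ hi (i + 1) - lo (i + 1)) :
    ∑ i ∈ Finset.range n,
        inorm (imul (ipowI (lo i, hi i) l1)
                    (ipowI (gH (lo (i + 1), hi (i + 1)) (lo i, hi i)) l2))
      ≤ ((l2 : ℝ) * ((n : ℝ) + 1) ^ l1) / ((l1 : ℝ) + (l2 : ℝ)) *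
        ∑ i ∈ Finset.range n,
          (inorm (gH (lo (i + 1), hi (i + 1)) (lo i, hi i))) ^ (l1 + l2) := by
  set d : ℕ → ℝ := fun i => hi (i + 1) - hi i
  have hlo_nonneg : ∀ i ≤ n, 0 ≤ lo i := fun i hin => h0lo ▸ apply_zero_le_of_le_succ hlo hin
  have hd : ∀ i < n, 0 ≤ d i := fun i hin => sub_nonneg.2 (hhi i hin)
  have hΔlo : ∀ i < n, 0 ≤ lo (i + 1) - lo i := fun i hin => sub_nonneg.2 (hlo i hin)
  have hΔ : ∀ i < n, gH (lo (i + 1), hi (i + 1)) (lo i, hi i) = (lo (i + 1) - lo i, d i) :=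
    fun i hin => gH_of_sub_le (by linarith [hlen i hin])
  have hpartial : ∀ i, hi i = ∑ j ∈ range i, d j := fun i => by
    rw [sum_range_sub hi, h0hi, sub_zero]
  have hlhs : ∀ i ∈ range n, inorm (imul (ipowI (lo i, hi i) l1)
      (ipowI (gH (lo (i + 1), hi (i + 1)) (lo i, hi i)) l2))
        = (∑ j ∈ range i, d j) ^ l1 * d i ^ l2 := fun i hin => by
    replace hin := mem_range.mp hin
    rw [hΔ i hin, inorm_imul_ipowI_of_nonneg (hlo_nonneg i hin.le) (hvalid i hin.le)
      (hΔlo i hin) (by linarith [hlen i hin]), hpartial]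
  have hrhs : ∀ i ∈ range n, inorm (gH (lo (i + 1), hi (i + 1)) (lo i, hi i)) ^ (l1 + l2)
      = d i ^ (l1 + l2) := fun i hin => by
    replace hin := mem_range.mp hin
    rw [hΔ i hin, inorm_of_nonneg (hΔlo i hin) (by linarith [hlen i hin])]
  rw [sum_congr rfl hlhs, sum_congr rfl hrhs, div_mul_eq_mul_div, le_div_iff₀ (by positivity),
    mul_comm]
  calc _ ≤ l2 * (n : ℝ) ^ l1 * ∑ i ∈ range n, d i ^ (l1 + l2) :=
        discrete_opial l1 l2 hl1 hl2 hd
    _ ≤ _ := by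
      have := sum_nonneg fun i hin => pow_nonneg (hd i (mem_range.mp hin)) (l1 + l2)
      gcongr
      linarith
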